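/- arXiv:2304.10956 — 2 statements merged into one kernel-verified Lean document; each statement's English description precedes it below -/
import Mathlib

section
/- Let D be a distributive lattice with ⊤ and ⊥, and let K ⊆ Spec D be ultraproduct-closed and up-closed, with complement Spec D \ K also ultraproduct-closed. Let (K_i)_{i : ι} be a nonempty codirected family of ultraproduct-closed up-closed subsets of Spec D (for all i j there exists k with K_k ⊆ K_i ∩ K_j). If K = ⋂ i, K_i, then K = K_i for some i. (Such K is a finite element of the lattice of closed down-sets.) -/
universe u v

/-- The set of prime ideals of a bounded distributive lattice `D`. -/
def Spec (D : Type u) [DistribLattice D] [BoundedOrder D] : Set (Order.Ideal D) :=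
  {x | x.IsPrime}

/-- `K` is ultraproduct-closed: whenever `f` is a family of ideals valued in
`K` and `J` is the ultraproduct of `f` along the ultrafilter `μ`
(characterised by `p ∈ J ↔ {s | p ∈ f s} ∈ μ`), then `J` belongs to `K`. -/
def UltraClosed (D : Type u) [DistribLattice D] [BoundedOrder D]
    (K : Set (Order.Ideal D)) : Prop :=
  ∀ (S : Type u) (f : S → Order.Ideal D) (μ : Ultrafilter S) (J : Order.Ideal D),
    (∀ s, f s ∈ K) → (∀ p : D, p ∈ J ↔ {s | p ∈ f s} ∈ μ) → J ∈ K

/-- `K` is up-closed in `Spec D`. -/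
def UpClosed (D : Type u) [DistribLattice D] [BoundedOrder D]
    (K : Set (Order.Ideal D)) : Prop :=
  ∀ x ∈ K, ∀ y ∈ Spec D, x ≤ y → y ∈ K

/-- `K` is down-closed in `Spec D`. -/
def DownClosed (D : Type u) [DistribLattice D] [BoundedOrder D]
    (K : Set (Order.Ideal D)) : Prop :=
  ∀ x ∈ K, ∀ y ∈ Spec D, y ≤ x → y ∈ K

/- If `K` were none of the `Ks i`, pick `f i ∈ Ks i \ K` and take the ultraproduct of `f` along an
ultrafilter on `ι` containing every cone `{j | Ks j ⊆ Ks i}`. Along it `f` eventually lies in each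
`Ks i`, so the ultraproduct lies in `⋂ i, Ks i = K`; but `f` lies everywhere in `Spec D \ K`, which
is ultraproduct-closed as well. -/

open Filter

namespace Order.Ideal

variable {P : Type*} [SemilatticeSup P] [OrderBot P]

def ultraproduct {S : Type*} (f : S → Ideal P) (μ : Ultrafilter S) : Ideal P where
  carrier := {p | ∀ᶠ s in μ, p ∈ f s}
  lower' _ _ hba ha := ha.mono fun _ hs => (f _).lower hba hs
  nonempty' := ⟨⊥, .of_forall fun _ => bot_mem _⟩
  directed' p hp q hq :=
    ⟨p ⊔ q, (hp.and hq).mono fun _ hs => sup_mem hs.1 hs.2, le_sup_left, le_sup_right⟩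

end Order.Ideal

theorem exists_ultrafilter_forall_cone_mem {ι α : Type*} [Nonempty ι] {Ks : ι → Set α}
    (hKs : Directed (· ⊇ ·) Ks) : ∃ μ : Ultrafilter ι, ∀ i, {j | Ks j ⊆ Ks i} ∈ μ := by
  have hdir : Directed (· ≥ ·) fun i => 𝓟 {j | Ks j ⊆ Ks i} := by
    intro i j
    obtain ⟨k, hki, hkj⟩ := hKs i j
    exact ⟨k, principal_mono.2 fun _ h => h.trans hki,
      principal_mono.2 fun _ h => h.trans hkj⟩
  have : (⨅ i, 𝓟 {j | Ks j ⊆ Ks i}).NeBot :=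
    iInf_neBot_of_directed hdir fun i => principal_neBot_iff.2 ⟨i, Set.Subset.rfl⟩
  exact ⟨.of _, fun i => Ultrafilter.of_le _ (mem_iInf_of_mem i (mem_principal_self _))⟩

-- `UltraClosed` only speaks of families indexed in `Type u`; indexing by the subtype `K` fixes this.
theorem UltraClosed.ultraproduct_mem {D : Type u} [DistribLattice D] [BoundedOrder D]
    {K : Set (Order.Ideal D)} (hK : UltraClosed D K) {S : Type*} {f : S → Order.Ideal D}
    {μ : Ultrafilter S} (hf : ∀ᶠ s in μ, f s ∈ K) : Order.Ideal.ultraproduct f μ ∈ K := by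
  classical
  obtain ⟨s₀, hs₀⟩ := hf.exists
  let g : S → K := fun s => if h : f s ∈ K then ⟨f s, h⟩ else ⟨f s₀, hs₀⟩
  have hg : ∀ᶠ s in μ, (g s : Order.Ideal D) = f s := hf.mono fun s h => by simp [g, h]
  refine hK K Subtype.val (μ.map g) _ (fun x => x.2) fun p => ?_
  exact eventually_congr (hg.mono fun _ h => h ▸ Iff.rfl)

theorem complemented_closed_is_finite_general {D : Type u} [DistribLattice D] [BoundedOrder D]
    (K : Set (Order.Ideal D))
    (hcompl : UltraClosed D (Spec D \ K))
    {ι : Type v} [Nonempty ι] (Ks : ι → Set (Order.Ideal D))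
    (hKssub : ∀ i, Ks i ⊆ Spec D)
    (hKscl : ∀ i, UltraClosed D (Ks i))
    (hcodir : ∀ i j, ∃ k, Ks k ⊆ Ks i ∩ Ks j)
    (hEq : K = ⋂ i, Ks i) :
    ∃ i, K = Ks i := by
  by_contra! hne
  have hf : ∀ i, ∃ x ∈ Ks i, x ∉ K := fun i =>
    Set.not_subset.1 fun h => hne i (hEq ▸ Set.iInter_subset Ks i |>.antisymm h)
  choose f hfKs hfK using hf
  obtain ⟨μ, hμ⟩ := exists_ultrafilter_forall_cone_mem (Ks := Ks) fun i j =>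
    (hcodir i j).imp fun _ => Set.subset_inter_iff.1
  have hK : Order.Ideal.ultraproduct f μ ∈ K :=
    hEq ▸ Set.mem_iInter.2 fun i =>
      (hKscl i).ultraproduct_mem <| mem_of_superset (hμ i) fun j hj => hj (hfKs j)
  have hnK : Order.Ideal.ultraproduct f μ ∈ Spec D \ K :=
    hcompl.ultraproduct_mem <| .of_forall fun j => ⟨hKssub j (hfKs j), hfK j⟩
  exact hnK.2 hK

/-- A complemented closed down-set is a finite element: if an
ultraproduct-closed up-closed `K` with ultraproduct-closed complement is the
intersection of a nonempty codirected family of ultraproduct-closed up-closed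
subsets, then it equals one of them. -/
theorem complemented_closed_is_finite {D : Type u} [DistribLattice D] [BoundedOrder D]
    (K : Set (Order.Ideal D)) (hKsub : K ⊆ Spec D)
    (hcl : UltraClosed D K) (hup : UpClosed D K)
    (hcompl : UltraClosed D (Spec D \ K))
    {ι : Type v} [Nonempty ι] (Ks : ι → Set (Order.Ideal D))
    (hKssub : ∀ i, Ks i ⊆ Spec D)
    (hKscl : ∀ i, UltraClosed D (Ks i)) (hKsup : ∀ i, UpClosed D (Ks i))
    (hcodir : ∀ i j, ∃ k, Ks k ⊆ Ks i ∩ Ks j)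
    (hEq : K = ⋂ i, Ks i) :
    ∃ i, K = Ks i :=
  complemented_closed_is_finite_general K hcompl Ks hKssub hKscl hcodir hEq
end

section
/- (Reconstruction of the distributive lattice.) Let D be a distributive lattice with ⊤ and ⊥. The map p ↦ B_p := {x ∈ Spec D | p ∈ x} is injective and order-reversing with p ≤ q ↔ B_q ⊆ B_p, each B_p is ultraproduct-closed and up-closed with complement Spec D \ B_p ultraproduct-closed and down-closed, and conversely every subset K ⊆ Spec D such that K is ultraproduct-closed and up-closed and Spec D \ K is ultraproduct-closed and down-closed equals B_p for a unique p ∈ D. Hence D is in order-reversing bijection with the complemented closed pairs of Spec D. -/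
universe u v

/-- The primitive set `B_p`: the prime ideals containing `p`. -/
def Bset {D : Type u} [DistribLattice D] [BoundedOrder D] (p : D) :
    Set (Order.Ideal D) :=
  {x | x ∈ Spec D ∧ p ∈ x}

/-!
Łoś's theorem makes `Spec D` closed under ultraproducts, and each `B_p` and its complement
inherit this since `p ∈ ⟨f, μ⟩` holds exactly when `p ∈ f s` for `μ`-almost all `s`.
Conversely, ultraproducts give a compactness principle: if every `q ∉ x` is avoided by some
member of an ultraproduct-closed up-closed `K`, then a suitable ultraproduct of these members
lies below `x`, so `x ∈ K`; dually for down-closed sets. Now let `I` be the intersection of `K`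
and `F` the set of elements lying in no prime of `Spec D \ K`. If the ideal `I` and the filter
`F` were disjoint, the prime separation theorem would give a prime `J ⊇ I` missing `F`, and
compactness would put `J` into both `K` and its complement. Any `p ∈ I ∩ F` has `K = B_p`.
-/

open Filter Order

def Order.Ideal.ultraproduct_s18 {P : Type*} [SemilatticeSup P] [OrderBot P] {S : Type*}
    (f : S → Ideal P) (μ : Ultrafilter S) : Ideal P :=
  IsIdeal.toIdeal (I := {p | {s | p ∈ f s} ∈ μ})
    { IsLowerSet := fun _ _ hqp hp => mem_of_superset hp fun s => (f s).lower hqp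
      Nonempty := ⟨⊥, mem_of_superset univ_mem fun s _ => (f s).bot_mem⟩
      Directed := fun p hp q hq =>
        ⟨p ⊔ q, mem_of_superset (inter_mem hp hq) fun _ hs => Ideal.sup_mem hs.1 hs.2,
          le_sup_left, le_sup_right⟩ }

namespace Order.Ideal

variable {P : Type*} [SemilatticeSup P] [OrderBot P] {S : Type*}

theorem mem_ultraproduct {f : S → Ideal P} {μ : Ultrafilter S} {p : P} :
    p ∈ ultraproduct_s18 f μ ↔ {s | p ∈ f s} ∈ μ :=
  Iff.rfl

theorem eq_ultraproduct {f : S → Ideal P} {μ : Ultrafilter S} {J : Ideal P}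
    (hJ : ∀ p, p ∈ J ↔ {s | p ∈ f s} ∈ μ) : J = ultraproduct_s18 f μ :=
  SetLike.ext hJ

end Order.Ideal

section Reconstruction

variable {D : Type u} [DistribLattice D] [BoundedOrder D]

theorem Order.Ideal.isPrime_ultraproduct {S : Type*} {f : S → Ideal D} (μ : Ultrafilter S)
    (hf : ∀ s, (f s).IsPrime) : (ultraproduct_s18 f μ).IsPrime := by
  have : (ultraproduct_s18 f μ).IsProper := isProper_of_notMem (p := ⊤) fun h =>
    μ.empty_notMem <| by simp [mem_ultraproduct, (hf _).top_notMem] at h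
  refine IsPrime.of_mem_or_mem fun {x y} hxy => ?_
  rw [mem_ultraproduct, mem_ultraproduct, ← Ultrafilter.union_mem_iff]
  exact mem_of_superset hxy fun s hs => (hf s).mem_or_mem hs

theorem ultraClosed_Spec : UltraClosed D (Spec D) := by
  rintro S f μ J hf hJ
  rw [Ideal.eq_ultraproduct hJ]
  exact Ideal.isPrime_ultraproduct μ hf

theorem Bset_subset_Spec (p : D) : Bset p ⊆ Spec D := fun _ hx => hx.1

theorem ultraClosed_Bset (p : D) : UltraClosed D (Bset p) := by
  rintro S f μ J hf hJ
  exact ⟨ultraClosed_Spec S f μ J (fun s => (hf s).1) hJ,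
    (hJ p).2 (mem_of_superset univ_mem fun s _ => (hf s).2)⟩

theorem upClosed_Bset (p : D) : UpClosed D (Bset p) :=
  fun _ hx _ hy hxy => ⟨hy, hxy hx.2⟩

theorem ultraClosed_Spec_diff_Bset (p : D) : UltraClosed D (Spec D \ Bset p) := by
  rintro S f μ J hf hJ
  have hJ_spec := ultraClosed_Spec S f μ J (fun s => (hf s).1) hJ
  refine ⟨hJ_spec, fun hpJ => μ.empty_notMem ?_⟩
  have hpf : ∀ s, p ∉ f s := fun s hp => (hf s).2 ⟨(hf s).1, hp⟩
  simpa [hpf] using (hJ p).1 hpJ.2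

theorem downClosed_Spec_diff_Bset (p : D) : DownClosed D (Spec D \ Bset p) :=
  fun _ hx _ hy hyx => ⟨hy, fun hyB => hx.2 ⟨hx.1, hyx hyB.2⟩⟩

theorem Bset_subset_Bset_iff {p q : D} : Bset q ⊆ Bset p ↔ p ≤ q := by
  refine ⟨fun hsub => ?_, fun hpq x hx => ⟨hx.1, x.lower hpq hx.2⟩⟩
  by_contra hpq
  have hdisj : Disjoint (PFilter.principal p : Set D) (Ideal.principal q : Set D) :=
    Set.disjoint_left.2 fun r hpr hrq => hpq (le_trans hpr hrq)
  obtain ⟨J, hJ, hqJ, hpJ⟩ := DistribLattice.prime_ideal_of_disjoint_filter_ideal hdisj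
  exact Set.disjoint_left.1 hpJ (PFilter.mem_principal.2 le_rfl)
    (hsub ⟨hJ, hqJ (Ideal.mem_principal.2 le_rfl)⟩).2

theorem Bset_injective : Function.Injective (Bset (D := D)) := fun _ _ h =>
  le_antisymm (Bset_subset_Bset_iff.1 h.ge) (Bset_subset_Bset_iff.1 h.le)

theorem mem_of_ultraClosed_of_upClosed {K : Set (Ideal D)} (hK : UltraClosed D K)
    (hK_up : UpClosed D K) {x : Ideal D} (hx : x ∈ Spec D)
    (h : ∀ q ∉ x, ∃ y ∈ K, q ∉ y) : x ∈ K := by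
  let S := {q : D // q ∉ x}
  have : Nonempty S := ⟨⟨⊤, hx.top_notMem⟩⟩
  have : IsCodirectedOrder S := ⟨fun a b =>
    ⟨⟨a.1 ⊓ b.1, fun hab => (hx.mem_or_mem hab).elim a.2 b.2⟩, inf_le_left, inf_le_right⟩⟩
  choose y hyK hy using fun s : S => h s.1 s.2
  let μ := Ultrafilter.of (atBot : Filter S)
  refine hK_up _ (hK S y μ _ hyK fun _ => Ideal.mem_ultraproduct) x hx fun r hr => ?_
  by_contra hrx
  -- `μ`-almost every index `s` satisfies both `s ≤ r` and `r ∈ y s`, forcing `s ∈ y s`.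
  obtain ⟨s, hsr, hrs⟩ := nonempty_of_mem <|
    inter_mem (Ultrafilter.of_le _ (Iic_mem_atBot (⟨r, hrx⟩ : S))) hr
  exact hy s ((y s).lower hsr hrs)

theorem mem_of_ultraClosed_of_downClosed {L : Set (Ideal D)} (hL : UltraClosed D L)
    (hL_down : DownClosed D L) {x : Ideal D} (hx : x ∈ Spec D)
    (h : ∀ p ∈ x, ∃ y ∈ L, p ∈ y) : x ∈ L := by
  let S := {p : D // p ∈ x}
  have : Nonempty S := ⟨⟨⊥, x.bot_mem⟩⟩
  have : IsDirectedOrder S :=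
    ⟨fun a b => ⟨⟨a.1 ⊔ b.1, Ideal.sup_mem a.2 b.2⟩, le_sup_left, le_sup_right⟩⟩
  choose y hyL hy using fun s : S => h s.1 s.2
  let μ := Ultrafilter.of (atTop : Filter S)
  refine hL_down _ (hL S y μ _ hyL fun _ => Ideal.mem_ultraproduct) x hx fun r hr => ?_
  exact mem_of_superset (Ultrafilter.of_le _ (Ici_mem_atTop (⟨r, hr⟩ : S)))
    fun s hrs => (y s).lower hrs (hy s)

def avoidingFilter (L : Set (Ideal D)) (hL : L ⊆ Spec D) : PFilter D :=
  IsPFilter.toPFilter (F := {p | ∀ y ∈ L, p ∉ y}) <| IsPFilter.of_def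
    ⟨⊤, fun _ hy => (hL hy).top_notMem⟩
    (fun a ha b hb => ⟨a ⊓ b, fun y hy hab => ((hL hy).mem_or_mem hab).elim (ha y hy) (hb y hy),
      inf_le_left, inf_le_right⟩)
    (fun hab ha y hy hb => ha y hy (y.lower hab hb))

theorem mem_avoidingFilter {L : Set (Ideal D)} {hL : L ⊆ Spec D} {p : D} :
    p ∈ avoidingFilter L hL ↔ ∀ y ∈ L, p ∉ y :=
  Iff.rfl

theorem exists_eq_Bset {K : Set (Ideal D)} (hK : K ⊆ Spec D) (hK_ultra : UltraClosed D K)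
    (hK_up : UpClosed D K) (hL_ultra : UltraClosed D (Spec D \ K))
    (hL_down : DownClosed D (Spec D \ K)) : ∃ p, K = Bset p := by
  let F := avoidingFilter (Spec D \ K) Set.sdiff_subset
  have hmeet : ¬Disjoint (F : Set D) (sInf K : Ideal D) := by
    intro hdisj
    obtain ⟨J, hJ, hIJ, hFJ⟩ := DistribLattice.prime_ideal_of_disjoint_filter_ideal hdisj
    have hJK : J ∈ K := mem_of_ultraClosed_of_upClosed hK_ultra hK_up hJ fun q hqJ => by
      by_contra! hq
      exact hqJ (hIJ (Order.Ideal.mem_sInf.2 hq))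
    have hJL : J ∈ Spec D \ K := mem_of_ultraClosed_of_downClosed hL_ultra hL_down hJ
      fun q hqJ => by
        by_contra! hq
        exact Set.disjoint_right.1 hFJ hqJ (mem_avoidingFilter.2 hq)
    exact hJL.2 hJK
  obtain ⟨p, hpF, hpI⟩ := Set.not_disjoint_iff_nonempty_inter.1 hmeet
  refine ⟨p, Set.ext fun x => ⟨fun hx => ⟨hK hx, Order.Ideal.mem_sInf.1 hpI x hx⟩, ?_⟩⟩
  rintro ⟨hx, hpx⟩
  by_contra hxK
  exact mem_avoidingFilter.1 hpF x ⟨hx, hxK⟩ hpx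

end Reconstruction

/-- Reconstruction of the distributive lattice: `p ↦ B_p` is an injective,
order-reversing map whose image is exactly the complemented closed pairs of
`Spec D`. -/
theorem distributive_lattice_reconstruction {D : Type u} [DistribLattice D] [BoundedOrder D] :
    Function.Injective (Bset (D := D)) ∧
    (∀ p q : D, p ≤ q ↔ Bset q ⊆ Bset p) ∧
    (∀ p : D, Bset p ⊆ Spec D ∧ UltraClosed D (Bset p) ∧ UpClosed D (Bset p) ∧
      UltraClosed D (Spec D \ Bset p) ∧ DownClosed D (Spec D \ Bset p)) ∧
    (∀ K : Set (Order.Ideal D), K ⊆ Spec D →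
      UltraClosed D K → UpClosed D K →
      UltraClosed D (Spec D \ K) → DownClosed D (Spec D \ K) →
      ∃! p : D, K = Bset p) := by
  refine ⟨Bset_injective, fun p q => Bset_subset_Bset_iff.symm, fun p =>
    ⟨Bset_subset_Spec p, ultraClosed_Bset p, upClosed_Bset p, ultraClosed_Spec_diff_Bset p,
      downClosed_Spec_diff_Bset p⟩, fun K hK hKu hKup hLu hLdown => ?_⟩
  obtain ⟨p, rfl⟩ := exists_eq_Bset hK hKu hKup hLu hLdown
  exact ⟨p, rfl, fun q hq => Bset_injective hq.symm⟩
end
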